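/- Let n ≥ 1, let D ⊆ ℝ^{2n} be open, let J be a C^∞ almost complex structure on D, and let u : D → ℝ be C² with ℒ(u)_z(v) ≥ 0 for all z ∈ D and v ∈ ℝ^{2n}. Suppose that for every y ∈ D there exist an open set Ω ⊆ ℂ, a point ζ₀ ∈ Ω, and a C² J-holomorphic map f : Ω → D with f(ζ₀) = y, with df_{ζ₀}(1) ≠ 0, and such that u ∘ f is harmonic on Ω (i.e. Δ(u∘f) = 0 on Ω, where Δ is the Euclidean Laplacian on ℝ² ≅ ℂ). Then for every y ∈ D there exists v ≠ 0 with ℒ(u)_y(v) = 0; that is, u is a solution of the homogeneous almost complex Monge–Ampère equation (ddᶜu + J*(ddᶜu))ⁿ = 0 on D. -/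

import Mathlib

open Filter Topology

/-- The 2-form `ddᶜu` associated with an almost complex structure `J`. -/
noncomputable def acDDc {E : Type*} [NormedAddCommGroup E] [NormedSpace ℝ E]
    (J : E → (E →L[ℝ] E)) (u : E → ℝ) (z v w : E) : ℝ :=
  - fderiv ℝ (fun z' => fderiv ℝ u z' (J z' w)) z v
    + fderiv ℝ (fun z' => fderiv ℝ u z' (J z' v)) z w

/-- The Levi form `ℒ(u)_z(v) := ddᶜu_z(v, J(z)v)`. -/
noncomputable def acLevi {E : Type*} [NormedAddCommGroup E] [NormedSpace ℝ E]
    (J : E → (E →L[ℝ] E)) (u : E → ℝ) (z v : E) : ℝ :=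
  acDDc J u z v (J z v)

/-- `f : Ω → E` is `J`-holomorphic on `Ω` if `df_ζ(iξ) = J(f(ζ))(df_ζ(ξ))`. -/
def IsJHolo {E : Type*} [NormedAddCommGroup E] [NormedSpace ℝ E]
    (J : E → (E →L[ℝ] E)) (Ω : Set ℂ) (f : ℂ → E) : Prop :=
  ∀ ζ ∈ Ω, ∀ ξ : ℂ, fderiv ℝ f ζ (Complex.I * ξ) = J (f ζ) (fderiv ℝ f ζ ξ)

/-- Euclidean Laplacian of a function on ℂ ≅ ℝ². -/
noncomputable def lap (g : ℂ → ℝ) (ζ : ℂ) : ℝ :=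
  fderiv ℝ (fun w => fderiv ℝ g w 1) ζ 1
    + fderiv ℝ (fun w => fderiv ℝ g w Complex.I) ζ Complex.I

theorem lap_eq_acLevi {E : Type*} [NormedAddCommGroup E] [NormedSpace ℝ E]
    {D : Set E} (hD : IsOpen D) {J : E → (E →L[ℝ] E)} (hJsmooth : ContDiffOn ℝ (⊤ : ℕ∞) J D)
    (hJsq : ∀ z ∈ D, (J z).comp (J z) = - ContinuousLinearMap.id ℝ E)
    {u : E → ℝ} (hu : ContDiffOn ℝ 2 u D)
    {Ω : Set ℂ} (hΩ : IsOpen Ω) {ζ₀ : ℂ} (hζ₀ : ζ₀ ∈ Ω)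
    {f : ℂ → E} (hf2 : ContDiffOn ℝ 2 f Ω) (hmap : Set.MapsTo f Ω D)
    (hJf : IsJHolo J Ω f) :
    lap (u ∘ f) ζ₀ = acLevi J u (f ζ₀) (fderiv ℝ f ζ₀ 1) := by
  set z₀ := f ζ₀ with hz₀def
  have hz₀ : z₀ ∈ D := hmap hζ₀
  set v : E := fderiv ℝ f ζ₀ 1 with hvdef
  set w : E := fderiv ℝ f ζ₀ Complex.I with hwdef
  -- regularity facts
  have hf2at : ContDiffAt ℝ 2 f ζ₀ := hf2.contDiffAt (hΩ.mem_nhds hζ₀)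
  have hu2at : ContDiffAt ℝ 2 u z₀ := hu.contDiffAt (hD.mem_nhds hz₀)
  have hJat : ContDiffAt ℝ (⊤ : ℕ∞) J z₀ := hJsmooth.contDiffAt (hD.mem_nhds hz₀)
  have hfd : ∀ ζ ∈ Ω, DifferentiableAt ℝ f ζ := fun ζ hζ =>
    (hf2.contDiffAt (hΩ.mem_nhds hζ)).differentiableAt two_ne_zero
  have hud : ∀ z ∈ D, DifferentiableAt ℝ u z := fun z hz =>
    (hu.contDiffAt (hD.mem_nhds hz)).differentiableAt two_ne_zero
  have hu' : DifferentiableAt ℝ (fderiv ℝ u) z₀ :=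
    (hu2at.fderiv_right (m := 1) le_rfl).differentiableAt one_ne_zero
  have hf' : DifferentiableAt ℝ (fderiv ℝ f) ζ₀ :=
    (hf2at.fderiv_right (m := 1) le_rfl).differentiableAt one_ne_zero
  have hJ' : DifferentiableAt ℝ J z₀ := hJat.differentiableAt (by simp)
  set B := fderiv ℝ (fderiv ℝ u) z₀ with hBdef
  set S := fderiv ℝ (fderiv ℝ f) ζ₀ with hSdef
  -- symmetry of second derivatives
  have hSsymm : ∀ a b : ℂ, S a b = S b a := hf2at.isSymmSndFDerivAt (by simp)
  -- derivative of applications of CLM-valued maps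
  have hSapp : ∀ ξ : ℂ, fderiv ℝ (fun ζ => fderiv ℝ f ζ ξ) ζ₀ = S.flip ξ := by
    intro ξ
    have h := fderiv_clm_apply hf' (differentiableAt_const ξ)
    simpa using h
  have hJapp : ∀ a : E, fderiv ℝ (fun z' => J z' a) z₀ = (fderiv ℝ J z₀).flip a := by
    intro a
    have h := fderiv_clm_apply hJ' (differentiableAt_const a)
    simpa using h
  -- first piece of the Levi form
  have hD1 : ∀ a b : E, fderiv ℝ (fun z' => fderiv ℝ u z' (J z' a)) z₀ b =
      fderiv ℝ u z₀ ((fderiv ℝ J z₀ b) a) + B b (J z₀ a) := by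
    intro a b
    have hja : DifferentiableAt ℝ (fun z' => J z' a) z₀ :=
      hJ'.clm_apply (differentiableAt_const a)
    rw [fderiv_clm_apply hu' hja, hJapp a]
    simp [ContinuousLinearMap.add_apply, hBdef]
  -- J-holomorphy at ζ₀
  have hwv : w = J z₀ v := by
    have h := hJf ζ₀ hζ₀ 1
    rwa [mul_one] at h
  have hJv : J z₀ v = w := hwv.symm
  have hJw : J z₀ w = -v := by
    rw [hwv]
    have h := ContinuousLinearMap.ext_iff.mp (hJsq z₀ hz₀) v
    simpa using h
  -- second derivative of u ∘ f
  have hcf : DifferentiableAt ℝ (fun ζ => fderiv ℝ u (f ζ)) ζ₀ := hu'.comp ζ₀ (hfd ζ₀ hζ₀)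
  have hfderivcomp : fderiv ℝ (fun ζ => fderiv ℝ u (f ζ)) ζ₀ = B.comp (fderiv ℝ f ζ₀) := by
    have h := fderiv_comp ζ₀ hu' (hfd ζ₀ hζ₀)
    simpa [Function.comp_def] using h
  have hev : ∀ ξ : ℂ, (fun ζ => fderiv ℝ (u ∘ f) ζ ξ)
      =ᶠ[𝓝 ζ₀] (fun ζ => fderiv ℝ u (f ζ) (fderiv ℝ f ζ ξ)) := by
    intro ξ
    filter_upwards [hΩ.mem_nhds hζ₀] with ζ hζ
    rw [fderiv_comp ζ (hud _ (hmap hζ)) (hfd ζ hζ)]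
    simp
  have hgder : ∀ ξ η : ℂ, fderiv ℝ (fun ζ => fderiv ℝ (u ∘ f) ζ ξ) ζ₀ η =
      fderiv ℝ u z₀ (S η ξ) + B (fderiv ℝ f ζ₀ η) (fderiv ℝ f ζ₀ ξ) := by
    intro ξ η
    rw [(hev ξ).fderiv_eq,
      fderiv_clm_apply hcf (hf'.clm_apply (differentiableAt_const ξ)),
      hfderivcomp, hSapp ξ]
    simp [ContinuousLinearMap.add_apply, hz₀def]
  -- differentiating the J-holomorphy relation
  have hJfcomp : fderiv ℝ (fun ζ => J (f ζ)) ζ₀ = (fderiv ℝ J z₀).comp (fderiv ℝ f ζ₀) := by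
    have h := fderiv_comp ζ₀ hJ' (hfd ζ₀ hζ₀)
    simpa [Function.comp_def] using h
  have hK : ∀ η ξ : ℂ, S η (Complex.I * ξ) =
      J z₀ (S η ξ) + (fderiv ℝ J z₀ (fderiv ℝ f ζ₀ η)) (fderiv ℝ f ζ₀ ξ) := by
    intro η ξ
    have hee : (fun ζ => fderiv ℝ f ζ (Complex.I * ξ))
        =ᶠ[𝓝 ζ₀] (fun ζ => J (f ζ) (fderiv ℝ f ζ ξ)) := by
      filter_upwards [hΩ.mem_nhds hζ₀] with ζ hζ
      exact hJf ζ hζ ξ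
    have h : fderiv ℝ (fun ζ => fderiv ℝ f ζ (Complex.I * ξ)) ζ₀
        = fderiv ℝ (fun ζ => J (f ζ) (fderiv ℝ f ζ ξ)) ζ₀ := hee.fderiv_eq
    have hJfd : DifferentiableAt ℝ (fun ζ => J (f ζ)) ζ₀ := hJ'.comp ζ₀ (hfd ζ₀ hζ₀)
    rw [hSapp (Complex.I * ξ),
      fderiv_clm_apply hJfd (hf'.clm_apply (differentiableAt_const ξ)),
      hJfcomp, hSapp ξ] at h
    have h2 := congrArg (fun T : ℂ →L[ℝ] E => T η) h
    simpa [ContinuousLinearMap.add_apply] using h2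
  -- the key cancellation
  have hsum : S 1 1 + S Complex.I Complex.I =
      (fderiv ℝ J z₀ w) v - (fderiv ℝ J z₀ v) w := by
    have h1 := hK 1 Complex.I
    have h2 := hK Complex.I 1
    rw [Complex.I_mul_I, map_neg] at h1
    rw [mul_one] at h2
    have h1' : S 1 1 = -(J z₀ (S 1 Complex.I) + (fderiv ℝ J z₀ v) w) := by
      rw [← h1]; abel
    rw [h1', h2, hSsymm 1 Complex.I]
    abel
  -- compute both sides
  have hlapval : lap (u ∘ f) ζ₀ =
      fderiv ℝ u z₀ (S 1 1) + B v v + (fderiv ℝ u z₀ (S Complex.I Complex.I) + B w w) := by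
    show fderiv ℝ (fun ζ => fderiv ℝ (u ∘ f) ζ 1) ζ₀ 1
        + fderiv ℝ (fun ζ => fderiv ℝ (u ∘ f) ζ Complex.I) ζ₀ Complex.I = _
    rw [hgder 1 1, hgder Complex.I Complex.I]
  have hlevival : acLevi J u z₀ v =
      B v v + B w w + (fderiv ℝ u z₀ ((fderiv ℝ J z₀ w) v) - fderiv ℝ u z₀ ((fderiv ℝ J z₀ v) w)) := by
    show -fderiv ℝ (fun z' => fderiv ℝ u z' (J z' (J z₀ v))) z₀ v
        + fderiv ℝ (fun z' => fderiv ℝ u z' (J z' v)) z₀ (J z₀ v) = _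
    rw [hJv, hD1 w v, hD1 v w, hJw, hJv]
    simp only [map_neg]
    ring
  have hdu : fderiv ℝ u z₀ (S 1 1) + fderiv ℝ u z₀ (S Complex.I Complex.I)
      = fderiv ℝ u z₀ ((fderiv ℝ J z₀ w) v) - fderiv ℝ u z₀ ((fderiv ℝ J z₀ v) w) := by
    rw [← map_add, hsum, map_sub]
  rw [hlapval, hlevival]
  linarith [hdu]

/-- A C² J-plurisubharmonic function that is harmonic along a J-holomorphic disk
with nonvanishing derivative through every point solves the homogeneous almost
complex Monge–Ampère equation. -/
theorem stmt_5 {n : ℕ} (hn : 1 ≤ n)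
    (D : Set (EuclideanSpace ℝ (Fin (2 * n)))) (hD : IsOpen D)
    (J : EuclideanSpace ℝ (Fin (2 * n)) →
      (EuclideanSpace ℝ (Fin (2 * n)) →L[ℝ] EuclideanSpace ℝ (Fin (2 * n))))
    (hJsmooth : ContDiffOn ℝ (⊤ : ℕ∞) J D)
    (hJsq : ∀ z ∈ D, (J z).comp (J z) =
      - ContinuousLinearMap.id ℝ (EuclideanSpace ℝ (Fin (2 * n))))
    (u : EuclideanSpace ℝ (Fin (2 * n)) → ℝ)
    (hu : ContDiffOn ℝ 2 u D)
    (hupsh : ∀ z ∈ D, ∀ v, 0 ≤ acLevi J u z v)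
    (hdisks : ∀ y ∈ D, ∃ Ω : Set ℂ, IsOpen Ω ∧ ∃ ζ₀ ∈ Ω,
      ∃ f : ℂ → EuclideanSpace ℝ (Fin (2 * n)),
        ContDiffOn ℝ 2 f Ω ∧ Set.MapsTo f Ω D ∧ IsJHolo J Ω f ∧
        f ζ₀ = y ∧ fderiv ℝ f ζ₀ 1 ≠ 0 ∧
        ∀ ζ ∈ Ω, lap (u ∘ f) ζ = 0) :
    ∀ y ∈ D, ∃ v, v ≠ 0 ∧ acLevi J u y v = 0 := by
  
  intro y hy
  obtain ⟨Ω, hΩ, ζ₀, hζ₀, f, hf2, hmap, hJf, hfζ, hdf, hlap⟩ := hdisks y hy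
  refine ⟨fderiv ℝ f ζ₀ 1, hdf, ?_⟩
  have h := lap_eq_acLevi hD hJsmooth hJsq hu hΩ hζ₀ hf2 hmap hJf
  rw [hfζ] at h
  rw [← h, hlap ζ₀ hζ₀]
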